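/- In any pair of Galois connections where e : A → B is a meet-preserving map with left adjoint ⟨e⟩ : B → A and right adjoint [e] : B → A (both between complete Boolean algebras, or more generally Heyting algebras), the inequality ⟨e⟩ a → [e] b ≤ [e] (a → b) holds for all a, b ∈ B, where → denotes Heyting implication. -/
import Mathlib

/-- In the adjoint triple `⟨e⟩ ⊣ e ⊣ [e]` with `e` finite-meet-preserving,
the inequality `⟨e⟩ a ⇨ [e] b ≤ [e] (a ⇨ b)` holds. -/
theorem diamond_imp_box_le_box_imp {H₁ H₂ : Type*} [HeytingAlgebra H₁] [HeytingAlgebra H₂]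
    (e : H₂ → H₁) (l r : H₁ → H₂)
    (hmeet : ∀ a b : H₂, e (a ⊓ b) = e a ⊓ e b)
    (gc1 : GaloisConnection l e) (gc2 : GaloisConnection e r)
    (hunit : ∀ b : H₁, b ≤ e (l b)) :
    ∀ a b : H₁, l a ⇨ r b ≤ r (a ⇨ b) := by
  intro a b
  rw [← gc2, le_himp_iff, inf_comm]
  calc a ⊓ e (l a ⇨ r b) ≤ e (l a) ⊓ e (l a ⇨ r b) := inf_le_inf_right _ (hunit a)
    _ = e (l a ⊓ (l a ⇨ r b)) := (hmeet _ _).symm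
    _ ≤ e (r b) := by
        have : l a ⊓ (l a ⇨ r b) ≤ r b := inf_himp_le
        exact gc2.monotone_l this
    _ ≤ b := gc2.l_u_le b
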